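/- In the setting of the context, for every y in the closed cube ∏_{i=1}^n [0,1]^{K_i}, every i, j ∈ [n], and every ℓ ∈ [K_i]: |T_{i,ℓ}(U⁰(y;j)) − T_{i,ℓ}(y)| ≤ Φ_{i,j}(y) · min{ T_{i,ℓ}(y), T_{i,ℓ}(U⁰(y;j)) }. -/

import Mathlib

open BigOperators

noncomputable section

namespace Meta

variable {n : ℕ} {K : Fin n → ℕ}

/-- Index set for the coordinates: pairs `(i, ℓ)` with `i ∈ [n]`, `ℓ ∈ [K_i]`. -/
abbrev Idx (K : Fin n → ℕ) := Σ i : Fin n, Fin (K i)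

/-- The ambient space `∏_{i=1}^n ℝ^{K_i}`. -/
abbrev Vec (K : Fin n → ℕ) := Idx K → ℝ

/-- The configuration space `Z = ∏_{i=1}^n [K_i]`. -/
abbrev Conf (K : Fin n → ℕ) := (i : Fin n) → Fin (K i)

/-- The closed cube `∏_{i=1}^n [0,1]^{K_i}`. -/
def cube (K : Fin n → ℕ) : Set (Vec K) := {y | ∀ s, 0 ≤ y s ∧ y s ≤ 1}

/-- The open cube `∏_{i=1}^n (0,1)^{K_i}`. -/
def openCube (K : Fin n → ℕ) : Set (Vec K) := {y | ∀ s, 0 < y s ∧ y s < 1}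

/-- `Ŷ`: rows are probability vectors. -/
def Yhat (K : Fin n → ℕ) : Set (Vec K) :=
  {y | y ∈ cube K ∧ ∀ i, ∑ ℓ : Fin (K i), y ⟨i, ℓ⟩ = 1}

/-- One-hot encoding `G(z)`. -/
def onehot (z : Conf K) : Vec K := fun s => if z s.1 = s.2 then 1 else 0

/-- `U¹(y; i, ℓ)`: `y` with its `i`-th row replaced by the `ℓ`-th standard basis vector. -/
def U1 (y : Vec K) (s₀ : Idx K) : Vec K :=
  fun s => if s.1 = s₀.1 then (if s = s₀ then 1 else 0) else y s

/-- `U⁰(y; i)`: `y` with its `i`-th row replaced by the zero vector. -/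
def U0 (y : Vec K) (i₀ : Fin n) : Vec K :=
  fun s => if s.1 = i₀ then 0 else y s

/-- The regularity assumption: `F` is continuous on the closed cube, `F1 s` is the partial
derivative of `F` in coordinate `s` on the open cube, `F2 s s'` is the partial derivative of
`F1 s'` in coordinate `s` on the open cube, and `F1`, `F2` are continuous on the closed cube
(i.e. `F` is C² in the interior and `F` and its first and second order partial derivatives
extend continuously to the boundary). -/
def SmoothData (F : Vec K → ℝ) (F1 : Idx K → Vec K → ℝ)
    (F2 : Idx K → Idx K → Vec K → ℝ) : Prop :=
  ContinuousOn F (cube K) ∧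
  (∀ s, ContinuousOn (F1 s) (cube K)) ∧
  (∀ s s', ContinuousOn (F2 s s') (cube K)) ∧
  (∀ y ∈ openCube K, ∀ s,
      HasDerivAt (fun t => F (Function.update y s t)) (F1 s y) (y s)) ∧
  (∀ y ∈ openCube K, ∀ s s',
      HasDerivAt (fun t => F1 s' (Function.update y s t)) (F2 s s' y) (y s))

/-- `b_{i,ℓ} = sup_{cube} |F_{i,ℓ}|`. -/
def bC (F1 : Idx K → Vec K → ℝ) (s : Idx K) : ℝ :=
  sSup ((fun y => |F1 s y|) '' cube K)

/-- `c_{i,ℓ;j,ℓ'} = sup_{cube} |F_{i,ℓ;j,ℓ'}|`. -/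
def cC (F2 : Idx K → Idx K → Vec K → ℝ) (s s' : Idx K) : ℝ :=
  sSup ((fun y => |F2 s s' y|) '' cube K)

/-- The neighborhood `N^I(y)`: points of the cube differing from `y` in at most two rows. -/
def NI (y : Vec K) : Set (Vec K) :=
  {y' | y' ∈ cube K ∧ ∃ i₀ i₀' : Fin n,
    ∀ s : Idx K, s.1 ≠ i₀ → s.1 ≠ i₀' → y' s = y s}

/-- Local Hessian bound I. -/
def HI (F2 : Idx K → Idx K → Vec K → ℝ) (s s' : Idx K) (y : Vec K) : ℝ :=
  sSup ((fun y' => |F2 s s' y'|) '' NI y)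

/-- The neighborhood `N^II(y, M)`. -/
def NII (y : Vec K) (M : ℝ) : Set (Vec K) :=
  {y' | y' ∈ cube K ∧ ∃ i₀ : Fin n,
    ∀ s : Idx K, s.1 ≠ i₀ → (M⁻¹ * y s ≤ y' s ∧ y' s ≤ M * y s)}

/-- Local Hessian bound II. -/
def HII (F2 : Idx K → Idx K → Vec K → ℝ) (s s' : Idx K) (y : Vec K) (M : ℝ) : ℝ :=
  sSup ((fun y' => |F2 s s' y'|) '' NII y M)

/-- `M_j = exp(2 max_{i,ℓ,ℓ'} c_{i,ℓ;j,ℓ'})`. -/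
def Mc (F2 : Idx K → Idx K → Vec K → ℝ) (j : Fin n) : ℝ :=
  Real.exp (2 * ⨆ i : Fin n, ⨆ ℓ : Fin (K i), ⨆ ℓ' : Fin (K j), cC F2 ⟨i, ℓ⟩ ⟨j, ℓ'⟩)

/-- `Φ_{i,j}(y)`. -/
def Phi (F2 : Idx K → Idx K → Vec K → ℝ) (i j : Fin n) (y : Vec K) : ℝ :=
  Real.exp (2 * ∑ ℓ' : Fin (K j), (⨆ ℓ : Fin (K i), HI F2 ⟨i, ℓ⟩ ⟨j, ℓ'⟩ y) * y ⟨j, ℓ'⟩) - 1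

/-- The smoothness term `E₁`. -/
def E1 (F2 : Idx K → Idx K → Vec K → ℝ) : ℝ :=
  (⨆ y ∈ Yhat K, ∑ i : Fin n, ⨆ j : Fin n, Phi F2 j i y) *
      (⨆ y ∈ Yhat K, ⨆ s : Idx K, ∑ s' : Idx K, HII F2 s s' y (Mc F2 s.1) * y s') +
    ⨆ y ∈ Yhat K, ∑ i : Fin n, ⨆ ℓ : Fin (K i),
      ∑ ℓ' : Fin (K i), HII F2 ⟨i, ℓ⟩ ⟨i, ℓ'⟩ y (Mc F2 i) * y ⟨i, ℓ'⟩

/-- `Λ(t) = log(2 + (∑_i max_ℓ b_{i,ℓ})/t)`. -/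
def Lam (F1 : Idx K → Vec K → ℝ) (t : ℝ) : ℝ :=
  Real.log (2 + (∑ i : Fin n, ⨆ ℓ : Fin (K i), bC F1 ⟨i, ℓ⟩) / t)

/-- `I(y) = ∑_{i,ℓ} y_{i,ℓ} log(y_{i,ℓ}/μ_i(ℓ))` (with `0 log 0 = 0`). -/
def Ifun (μ : (i : Fin n) → Fin (K i) → ℝ) (y : Vec K) : ℝ :=
  ∑ s : Idx K, y s * Real.log (y s / μ s.1 s.2)

/-- The product base measure `μ(z) = ∏ᵢ μᵢ(zᵢ)`. -/
def muProd (μ : (i : Fin n) → Fin (K i) → ℝ) (z : Conf K) : ℝ :=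
  ∏ i, μ i (z i)

/-- The partition function `S = ∑_z e^{f(z)} μ(z)`. -/
def Spart (μ : (i : Fin n) → Fin (K i) → ℝ) (f : Conf K → ℝ) : ℝ :=
  ∑ z : Conf K, Real.exp (f z) * muProd μ z

/-- The (collapsed) posterior `P(z) = e^{f(z)} μ(z) / S`. -/
def Ppost (μ : (i : Fin n) → Fin (K i) → ℝ) (f : Conf K → ℝ) (z : Conf K) : ℝ :=
  Real.exp (f z) * muProd μ z / Spart μ f

/-- The product distribution `Q_y(z) = ∏ᵢ y_{i,zᵢ}`. -/
def Qy (y : Vec K) (z : Conf K) : ℝ := ∏ i, y ⟨i, z i⟩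

/-- KL divergence of probability mass functions on the finite configuration space
(here the second argument is everywhere positive, and `0·log(0/p) = 0` holds automatically). -/
def KLfin (Q P : Conf K → ℝ) : ℝ := ∑ z : Conf K, Q z * Real.log (Q z / P z)

/-- `D` is an `ε`-cover for `F`. -/
def IsCover (F : Vec K → ℝ) (ε : ℝ) (Dc : Finset (Vec K)) : Prop :=
  ∀ y ∈ Yhat K, ∃ d ∈ Dc,
    ∑ i : Fin n, ⨆ ℓ : Fin (K i), |F (U1 y ⟨i, ℓ⟩) - F (U0 y i) - d ⟨i, ℓ⟩| ≤ ε

end Meta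

namespace Meta

variable {n : ℕ} {K : Fin n → ℕ}

/-- `T_{i,ℓ}(y)`: the conditional probability of one coordinate given the others. -/
def Tmap (μ : (i : Fin n) → Fin (K i) → ℝ) (F : Vec K → ℝ) (y : Vec K) : Vec K :=
  fun s =>
    Real.exp (F (U1 y s)) * μ s.1 s.2 /
      ∑ s' : Fin (K s.1), Real.exp (F (U1 y ⟨s.1, s'⟩)) * μ s.1 s'

end Meta

/-!
For fixed `i`, both `T(y)_{i,·}` and `T(U⁰(y;j))_{i,·}` are softmaxes, with weights `μ_i`, of
`A_ℓ = F(U¹(y;i,ℓ))` and `B_ℓ = F(U¹(U⁰(y;j);i,ℓ))`, so their ratio lies in `[e^{-L}, e^L]` as soon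
as the oscillation of `A - B` is at most `L`. Up to a constant independent of `ℓ`, `A_ℓ - B_ℓ` is
the increment, between `U⁰(·;j)` and the full row `j`, of the difference of `F` in the coordinate
`(i,ℓ)`. Filling row `j` one entry at a time, each step is a mixed second difference of `F` in the
coordinates `(i,ℓ)` and `(j,ℓ')`, hence at most `H^I_{i,ℓ;j,ℓ'}(y) · y_{j,ℓ'}` by the mean value
theorem applied twice; as `F` is only differentiable inside the cube, this is first done on a
slightly contracted rectangle and then passed to the limit.
-/

open Set Filter Topology Function

theorem abs_sub_sub_add_le_of_hasDerivAt {f f₁ f₂ : ℝ → ℝ → ℝ} {α β γ δ C : ℝ}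
    (hf : ∀ t ∈ uIcc α β, ∀ u ∈ uIcc γ δ, HasDerivAt (f t) (f₁ t u) u)
    (hf₁ : ∀ t ∈ uIcc α β, ∀ u ∈ uIcc γ δ, HasDerivAt (f₁ · u) (f₂ t u) t)
    (hC : ∀ t ∈ uIcc α β, ∀ u ∈ uIcc γ δ, |f₂ t u| ≤ C) :
    |f β δ - f α δ - f β γ + f α γ| ≤ C * |β - α| * |δ - γ| := by
  have hinner : ∀ u ∈ uIcc γ δ, ‖f₁ β u - f₁ α u‖ ≤ C * |β - α| := fun u hu =>
    convex_uIcc α β |>.norm_image_sub_le_of_norm_hasDerivWithin_le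
      (fun t ht => (hf₁ t ht u hu).hasDerivWithinAt) (fun t ht => hC t ht u hu)
      left_mem_uIcc right_mem_uIcc
  have houter := convex_uIcc γ δ |>.norm_image_sub_le_of_norm_hasDerivWithin_le
    (f := fun u => f β u - f α u)
    (fun u hu => ((hf β right_mem_uIcc u hu).sub (hf α left_mem_uIcc u hu)).hasDerivWithinAt)
    hinner left_mem_uIcc right_mem_uIcc
  rw [show f β δ - f α δ - f β γ + f α γ = (f β δ - f α δ) - (f β γ - f α γ) by ring]
  simpa only [Real.norm_eq_abs] using houter

theorem exp_mul_div_sum_le_exp_mul {ι : Type*} [Fintype ι] {μ : ι → ℝ} (hμ : ∀ t, 0 < μ t)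
    {A B : ι → ℝ} {L : ℝ} (hAB : ∀ s t, (A s - B s) - (A t - B t) ≤ L) (ℓ : ι) :
    Real.exp (B ℓ) * μ ℓ / ∑ t, Real.exp (B t) * μ t ≤
      Real.exp L * (Real.exp (A ℓ) * μ ℓ / ∑ t, Real.exp (A t) * μ t) := by
  have hpos : ∀ C : ι → ℝ, 0 < ∑ t, Real.exp (C t) * μ t := fun C =>
    Finset.sum_pos (fun t _ => by have := hμ t; positivity) ⟨ℓ, Finset.mem_univ ℓ⟩
  rw [← mul_div_assoc, div_le_div_iff₀ (hpos B) (hpos A), Finset.mul_sum, Finset.mul_sum]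
  refine Finset.sum_le_sum fun t _ => ?_
  have hexp : Real.exp (B ℓ + A t) ≤ Real.exp (L + A ℓ + B t) :=
    Real.exp_le_exp.2 (by linarith [hAB t ℓ])
  rw [Real.exp_add, Real.exp_add, Real.exp_add] at hexp
  have := mul_le_mul_of_nonneg_right hexp (mul_nonneg (hμ ℓ).le (hμ t).le)
  linarith

theorem abs_sub_le_sub_one_mul_min {p q M : ℝ} (hpq : p ≤ M * q) (hqp : q ≤ M * p) :
    |p - q| ≤ (M - 1) * min p q := by
  rcases le_total p q with h | h
  · rw [min_eq_left h, abs_of_nonpos (sub_nonpos.2 h)]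
    linarith
  · rw [min_eq_right h, abs_of_nonneg (sub_nonneg.2 h)]
    linarith

namespace Meta

variable {n : ℕ} {K : Fin n → ℕ}

lemma isCompact_cube : IsCompact (cube K) := by
  convert isCompact_univ_pi fun _ : Idx K => isCompact_Icc (a := (0 : ℝ)) (b := 1)
  ext y
  simp [cube, Set.pi]

def rect (w : Vec K) (a b : Idx K) (t u : ℝ) : Vec K :=
  update (update w a t) b u

def mixedDiff (F : Vec K → ℝ) (w : Vec K) (a b : Idx K) (α β γ δ : ℝ) : ℝ :=
  F (rect w a b β δ) - F (rect w a b α δ) - F (rect w a b β γ) + F (rect w a b α γ)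

lemma update_rect_right (w : Vec K) (a b : Idx K) (t u v : ℝ) :
    update (rect w a b t u) b v = rect w a b t v :=
  update_idem _ _ _

lemma update_rect_left (w : Vec K) {a b : Idx K} (hab : a ≠ b) (t u v : ℝ) :
    update (rect w a b t u) a v = rect w a b v u := by
  rw [rect, rect, ← update_comm hab, update_idem, update_comm hab]

lemma rect_apply_right (w : Vec K) (a b : Idx K) (t u : ℝ) : rect w a b t u b = u :=
  update_self ..

lemma rect_apply_left (w : Vec K) {a b : Idx K} (hab : a ≠ b) (t u : ℝ) :
    rect w a b t u a = t := by
  rw [rect, update_of_ne hab, update_self]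

lemma rect_mem_openCube {w : Vec K} (hw : w ∈ openCube K) (a b : Idx K) {t u : ℝ}
    (ht : t ∈ Ioo 0 1) (hu : u ∈ Ioo 0 1) : rect w a b t u ∈ openCube K := by
  intro r
  simp only [rect, update_apply]
  split_ifs
  exacts [hu, ht, hw r]

lemma rect_mem_cube {w : Vec K} (hw : w ∈ cube K) (a b : Idx K) {t u : ℝ}
    (ht : t ∈ Icc 0 1) (hu : u ∈ Icc 0 1) : rect w a b t u ∈ cube K := by
  intro r
  simp only [rect, update_apply]
  split_ifs
  exacts [hu, ht, hw r]

lemma abs_mixedDiff_le_of_openCube {F : Vec K → ℝ} {F1 : Idx K → Vec K → ℝ}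
    {F2 : Idx K → Idx K → Vec K → ℝ} (hsm : SmoothData F F1 F2) {w : Vec K}
    (hw : w ∈ openCube K) {a b : Idx K} (hab : a ≠ b) {α β γ δ C : ℝ}
    (hα : α ∈ Ioo 0 1) (hβ : β ∈ Ioo 0 1) (hγ : γ ∈ Ioo 0 1) (hδ : δ ∈ Ioo 0 1)
    (hC : ∀ t ∈ Ioo 0 1, ∀ u ∈ Ioo 0 1, |F2 a b (rect w a b t u)| ≤ C) :
    |mixedDiff F w a b α β γ δ| ≤ C * |β - α| * |δ - γ| := by
  have hIoo : ∀ {x y}, x ∈ Ioo (0 : ℝ) 1 → y ∈ Ioo (0 : ℝ) 1 → uIcc x y ⊆ Ioo 0 1 :=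
    fun hx hy => ordConnected_Ioo.uIcc_subset hx hy
  have hopen : ∀ t ∈ uIcc α β, ∀ u ∈ uIcc γ δ, rect w a b t u ∈ openCube K :=
    fun t ht u hu => rect_mem_openCube hw a b (hIoo hα hβ ht) (hIoo hγ hδ hu)
  refine abs_sub_sub_add_le_of_hasDerivAt (f := fun t u => F (rect w a b t u))
    (f₁ := fun t u => F1 b (rect w a b t u)) (f₂ := fun t u => F2 a b (rect w a b t u))
    (fun t ht u hu => ?_) (fun t ht u hu => ?_)
    (fun t ht u hu => hC t (hIoo hα hβ ht) u (hIoo hγ hδ hu))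
  · simpa only [update_rect_right, rect_apply_right] using hsm.2.2.2.1 _ (hopen t ht u hu) b
  · simpa only [update_rect_left w hab, rect_apply_left w hab] using
      hsm.2.2.2.2 _ (hopen t ht u hu) a b

def contract (ε t : ℝ) : ℝ := ε + (1 - 2 * ε) * t

lemma contract_mem_Ioo {ε t : ℝ} (hε : ε ∈ Ioo 0 (1 / 2)) (ht : t ∈ Icc 0 1) :
    contract ε t ∈ Ioo 0 1 := by
  have h2ε : 0 ≤ 1 - 2 * ε := by linarith [hε.2]
  unfold contract
  exact ⟨by nlinarith [mul_nonneg h2ε ht.1, hε.1],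
    by nlinarith [mul_nonneg h2ε (sub_nonneg.2 ht.2), hε.1]⟩

lemma contract_mem_Icc {ε t : ℝ} (hε : ε ∈ Icc 0 (1 / 2)) (ht : t ∈ Icc 0 1) :
    contract ε t ∈ Icc 0 1 := by
  have h2ε : 0 ≤ 1 - 2 * ε := by linarith [hε.2]
  unfold contract
  exact ⟨by nlinarith [mul_nonneg h2ε ht.1, hε.1],
    by nlinarith [mul_nonneg h2ε (sub_nonneg.2 ht.2), hε.1]⟩

lemma abs_contract_sub_contract {ε : ℝ} (hε : ε ≤ 1 / 2) (s t : ℝ) :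
    |contract ε s - contract ε t| = (1 - 2 * ε) * |s - t| := by
  rw [contract, contract, show ε + (1 - 2 * ε) * s - (ε + (1 - 2 * ε) * t) =
    (1 - 2 * ε) * (s - t) by ring, abs_mul, abs_of_nonneg (by linarith)]

lemma abs_contract_sub_le {ε t : ℝ} (hε : 0 ≤ ε) (ht : t ∈ Icc 0 1) :
    |contract ε t - t| ≤ ε := by
  rw [contract, abs_le]
  constructor <;> nlinarith [ht.1, ht.2]

def squeeze (ε : ℝ) (x : Vec K) : Vec K := fun r => contract ε (x r)

lemma squeeze_mem_openCube {ε : ℝ} (hε : ε ∈ Ioo 0 (1 / 2)) {x : Vec K} (hx : x ∈ cube K) :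
    squeeze ε x ∈ openCube K := fun r => contract_mem_Ioo hε (hx r)

lemma squeeze_mem_cube {ε : ℝ} (hε : ε ∈ Icc 0 (1 / 2)) {x : Vec K} (hx : x ∈ cube K) :
    squeeze ε x ∈ cube K := fun r => contract_mem_Icc hε (hx r)

lemma squeeze_rect (ε : ℝ) (w : Vec K) (a b : Idx K) (t u : ℝ) :
    squeeze ε (rect w a b t u) = rect (squeeze ε w) a b (contract ε t) (contract ε u) := by
  ext r
  simp only [squeeze, rect, update_apply]
  split_ifs <;> rfl

lemma dist_rect_squeeze_le {ε : ℝ} (hε : 0 ≤ ε) {w : Vec K} (hw : w ∈ cube K) (a b : Idx K)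
    (t u : ℝ) : dist (rect (squeeze ε w) a b t u) (rect w a b t u) ≤ ε := by
  refine (dist_pi_le_iff hε).2 fun r => ?_
  simp only [rect, update_apply]
  split_ifs
  · simpa using hε
  · simpa using hε
  · exact abs_contract_sub_le hε (hw r)

lemma tendsto_squeeze {x : Vec K} (hx : x ∈ cube K) :
    Tendsto (squeeze · x) (𝓝[>] 0) (𝓝[cube K] x) := by
  refine tendsto_nhdsWithin_iff.2 ⟨?_, ?_⟩
  · have : Continuous (squeeze · x) := by unfold squeeze contract; fun_prop
    have h0 : squeeze 0 x = x := by ext; simp [squeeze, contract]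
    simpa only [h0] using (this.tendsto 0).mono_left nhdsWithin_le_nhds
  · filter_upwards [Ioo_mem_nhdsGT (by norm_num : (0 : ℝ) < 1 / 2)] with ε hε
    exact squeeze_mem_cube (Ioo_subset_Icc_self hε) hx

lemma abs_mixedDiff_squeeze_le {F : Vec K → ℝ} {F1 : Idx K → Vec K → ℝ}
    {F2 : Idx K → Idx K → Vec K → ℝ} (hsm : SmoothData F F1 F2) {w : Vec K}
    (hw : w ∈ cube K) {a b : Idx K} (hab : a ≠ b) {ε α β γ δ C : ℝ} (hε : ε ∈ Ioo 0 (1 / 2))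
    (hα : α ∈ Icc 0 1) (hβ : β ∈ Icc 0 1) (hγ : γ ∈ Icc 0 1) (hδ : δ ∈ Icc 0 1) (hC0 : 0 ≤ C)
    (hC : ∀ t ∈ Ioo 0 1, ∀ u ∈ Ioo 0 1, |F2 a b (rect (squeeze ε w) a b t u)| ≤ C) :
    |mixedDiff F (squeeze ε w) a b (contract ε α) (contract ε β) (contract ε γ) (contract ε δ)|
      ≤ C * |β - α| * |δ - γ| :=
  calc _ ≤ C * |contract ε β - contract ε α| * |contract ε δ - contract ε γ| :=
        abs_mixedDiff_le_of_openCube hsm (squeeze_mem_openCube hε hw) hab (contract_mem_Ioo hε hα)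
          (contract_mem_Ioo hε hβ) (contract_mem_Ioo hε hγ) (contract_mem_Ioo hε hδ) hC
    _ = (1 - 2 * ε) ^ 2 * (C * |β - α| * |δ - γ|) := by
        rw [abs_contract_sub_contract hε.2.le, abs_contract_sub_contract hε.2.le]
        ring
    _ ≤ C * |β - α| * |δ - γ| := mul_le_of_le_one_left (by positivity) (by nlinarith [hε.1, hε.2])

lemma abs_mixedDiff_le {F : Vec K → ℝ} {F1 : Idx K → Vec K → ℝ}
    {F2 : Idx K → Idx K → Vec K → ℝ} (hsm : SmoothData F F1 F2) {w : Vec K}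
    (hw : w ∈ cube K) {a b : Idx K} (hab : a ≠ b) {α β γ δ H : ℝ}
    (hα : α ∈ Icc 0 1) (hβ : β ∈ Icc 0 1) (hγ : γ ∈ Icc 0 1) (hδ : δ ∈ Icc 0 1)
    (hH : ∀ q ∈ cube K, (∀ r, r ≠ a → r ≠ b → q r = w r) → |F2 a b q| ≤ H) :
    |mixedDiff F w a b α β γ δ| ≤ H * |β - α| * |δ - γ| := by
  have hlim : Tendsto (fun ε => mixedDiff F (squeeze ε w) a b
      (contract ε α) (contract ε β) (contract ε γ) (contract ε δ))
      (𝓝[>] 0) (𝓝 (mixedDiff F w a b α β γ δ)) := by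
    have hF : ∀ t ∈ Icc (0 : ℝ) 1, ∀ u ∈ Icc (0 : ℝ) 1, Tendsto
        (fun ε => F (squeeze ε (rect w a b t u))) (𝓝[>] 0) (𝓝 (F (rect w a b t u))) :=
      fun t ht u hu => (hsm.1 _ (rect_mem_cube hw a b ht hu)).tendsto.comp
        (tendsto_squeeze (rect_mem_cube hw a b ht hu))
    simp only [mixedDiff, ← squeeze_rect]
    exact (((hF β hβ δ hδ).sub (hF α hα δ hδ)).sub (hF β hβ γ hγ)).add (hF α hα γ hγ)
  have hH0 : 0 ≤ H := (abs_nonneg _).trans (hH w hw fun _ _ _ => rfl)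
  refine le_of_forall_pos_le_add fun d hd => ?_
  obtain ⟨η, hη, hF2⟩ := Metric.uniformContinuousOn_iff.1
    (isCompact_cube.uniformContinuousOn_of_continuous (hsm.2.2.1 a b)) d hd
  -- for `ε < η`, uniform continuity of `F2 a b` turns the bound `H` into `H + d` after squeezing
  have hC : ∀ ε ∈ Ioo 0 (min η (1 / 2)), ∀ t ∈ Ioo 0 1, ∀ u ∈ Ioo 0 1,
      |F2 a b (rect (squeeze ε w) a b t u)| ≤ H + d := by
    intro ε hε t ht u hu
    have hq := rect_mem_cube hw a b (Ioo_subset_Icc_self ht) (Ioo_subset_Icc_self hu)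
    have hclose := hF2 _ (rect_mem_cube (squeeze_mem_cube ⟨hε.1.le, hε.2.le.trans
      (min_le_right _ _)⟩ hw) a b (Ioo_subset_Icc_self ht) (Ioo_subset_Icc_self hu)) _ hq
      ((dist_rect_squeeze_le hε.1.le hw a b t u).trans_lt (hε.2.trans_le (min_le_left _ _)))
    have hHq := hH _ hq fun r hra hrb => by rw [rect, update_of_ne hrb, update_of_ne hra]
    rw [Real.dist_eq] at hclose
    linarith [abs_sub_abs_le_abs_sub (F2 a b (rect (squeeze ε w) a b t u))
      (F2 a b (rect w a b t u)), (abs_lt.1 hclose).2]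
  have hP : |β - α| * |δ - γ| ≤ 1 :=
    mul_le_one₀ (abs_sub_le_of_nonneg_of_le hβ.1 hβ.2 hα.1 hα.2) (abs_nonneg _)
      (abs_sub_le_of_nonneg_of_le hδ.1 hδ.2 hγ.1 hγ.2)
  calc |mixedDiff F w a b α β γ δ| ≤ (H + d) * |β - α| * |δ - γ| :=
        le_of_tendsto hlim.abs <| mem_of_superset (Ioo_mem_nhdsGT (lt_min hη one_half_pos))
          fun ε hε => abs_mixedDiff_squeeze_le hsm hw hab
            ⟨hε.1, hε.2.trans_le (min_le_right _ _)⟩ hα hβ hγ hδ (by linarith) (hC ε hε)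
    _ ≤ H * |β - α| * |δ - γ| + d := by nlinarith

def rowPrefix (x : Vec K) (j : Fin n) (m : ℕ) : Vec K :=
  fun r => if r.1 = j ∧ m ≤ (r.2 : ℕ) then 0 else x r

lemma rowPrefix_zero (x : Vec K) (j : Fin n) : rowPrefix x j 0 = U0 x j := by
  ext r
  simp [rowPrefix, U0]

lemma rowPrefix_card (x : Vec K) (j : Fin n) : rowPrefix x j (K j) = x := by
  ext ⟨r₁, r₂⟩
  simp only [rowPrefix, ite_eq_right_iff, and_imp]
  rintro rfl h
  exact absurd r₂.isLt (not_lt.2 h)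

lemma rowPrefix_apply_of_ne (x : Vec K) {j : Fin n} (m : ℕ) {r : Idx K} (hr : r.1 ≠ j) :
    rowPrefix x j m r = x r := by
  simp [rowPrefix, hr]

lemma rowPrefix_apply_self (x : Vec K) (j : Fin n) (m : Fin (K j)) :
    rowPrefix x j m ⟨j, m⟩ = 0 := by
  simp [rowPrefix]

lemma rowPrefix_succ (x : Vec K) (j : Fin n) (m : Fin (K j)) :
    rowPrefix x j (m + 1) = update (rowPrefix x j m) ⟨j, m⟩ (x ⟨j, m⟩) := by
  ext ⟨r₁, r₂⟩
  by_cases hr : r₁ = j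
  · subst hr
    by_cases hm : r₂ = m
    · subst hm
      simp [rowPrefix]
    · have : (r₂ : ℕ) ≠ m := Fin.val_ne_of_ne hm
      simp only [rowPrefix, update_apply, Sigma.mk.inj_iff, heq_eq_eq, hm, and_false,
        if_false, true_and]
      congr 1
      simp only [eq_iff_iff]
      omega
  · simp [rowPrefix, hr]

lemma rowPrefix_mem_cube {x : Vec K} (hx : x ∈ cube K) (j : Fin n) (m : ℕ) :
    rowPrefix x j m ∈ cube K := fun r => by
  simp only [rowPrefix]
  split_ifs
  exacts [⟨le_rfl, zero_le_one⟩, hx r]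

lemma sub_rowPrefix_eq_mixedDiff (F : Vec K → ℝ) (x : Vec K) {a : Idx K} {j : Fin n}
    (haj : a.1 ≠ j) (m : Fin (K j)) :
    (F (rowPrefix x j (m + 1)) - F (update (rowPrefix x j (m + 1)) a 0)) -
        (F (rowPrefix x j m) - F (update (rowPrefix x j m) a 0)) =
      mixedDiff F (rowPrefix x j m) a ⟨j, m⟩ 0 (x a) 0 (x ⟨j, m⟩) := by
  have hab : a ≠ ⟨j, m⟩ := fun h => haj (congrArg Sigma.fst h)
  have hPa : update (rowPrefix x j m) a (x a) = rowPrefix x j m :=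
    update_eq_self_iff.2 (rowPrefix_apply_of_ne x m haj).symm
  have hPb : ∀ t, update (update (rowPrefix x j m) a t) ⟨j, m⟩ 0 = update (rowPrefix x j m) a t :=
    fun t => update_eq_self_iff.2 (by rw [update_of_ne hab.symm, rowPrefix_apply_self])
  have hP0 : update (rowPrefix x j m) ⟨j, m⟩ 0 = rowPrefix x j m :=
    update_eq_self_iff.2 (rowPrefix_apply_self x j m).symm
  simp only [mixedDiff, rect, hPb, hPa, hP0, rowPrefix_succ, update_comm hab]
  ring

lemma abs_sub_update_zero_sub_U0_le {F : Vec K → ℝ} {F1 : Idx K → Vec K → ℝ}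
    {F2 : Idx K → Idx K → Vec K → ℝ} (hsm : SmoothData F F1 F2) {x : Vec K} (hx : x ∈ cube K)
    {a : Idx K} {j : Fin n} (haj : a.1 ≠ j) {H : Fin (K j) → ℝ}
    (hH : ∀ m, ∀ q ∈ cube K, (∀ r : Idx K, r.1 ≠ a.1 → r.1 ≠ j → q r = x r) →
      |F2 a ⟨j, m⟩ q| ≤ H m) :
    |(F x - F (update x a 0)) - (F (U0 x j) - F (update (U0 x j) a 0))| ≤
      ∑ m, H m * x ⟨j, m⟩ := by
  set g : Vec K → ℝ := fun v => F v - F (update v a 0)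
  have htel : g x - g (U0 x j) =
      ∑ m : Fin (K j), (g (rowPrefix x j (m + 1)) - g (rowPrefix x j m)) := by
    rw [Fin.sum_univ_eq_sum_range (fun m => g (rowPrefix x j (m + 1)) - g (rowPrefix x j m)),
      Finset.sum_range_sub (fun m => g (rowPrefix x j m)), rowPrefix_card, rowPrefix_zero]
  rw [htel]
  refine (Finset.abs_sum_le_sum_abs _ _).trans (Finset.sum_le_sum fun m _ => ?_)
  have hab : a ≠ ⟨j, m⟩ := fun h => haj (congrArg Sigma.fst h)
  have hHm : ∀ q ∈ cube K, (∀ r, r ≠ a → r ≠ ⟨j, m⟩ → q r = rowPrefix x j m r) →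
      |F2 a ⟨j, m⟩ q| ≤ H m := fun q hq hqP => hH m q hq fun r hra hrj => by
    rw [hqP r (fun h => hra (h ▸ rfl)) (fun h => hrj (h ▸ rfl)), rowPrefix_apply_of_ne x m hrj]
  have hH0 : 0 ≤ H m := (abs_nonneg _).trans (hH m x hx fun _ _ _ => rfl)
  calc |g (rowPrefix x j (m + 1)) - g (rowPrefix x j m)|
      ≤ H m * |x a - 0| * |x ⟨j, m⟩ - 0| := by
        rw [sub_rowPrefix_eq_mixedDiff F x haj m]
        exact abs_mixedDiff_le hsm (rowPrefix_mem_cube hx j m) hab ⟨le_rfl, zero_le_one⟩ (hx a)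
          ⟨le_rfl, zero_le_one⟩ (hx _) hHm
    _ ≤ H m * x ⟨j, m⟩ := by
        rw [sub_zero, sub_zero, abs_of_nonneg (hx a).1, abs_of_nonneg (hx _).1]
        exact mul_le_mul_of_nonneg_right (mul_le_of_le_one_right hH0 (hx a).2) (hx _).1

lemma abs_le_iSup_HI {F2 : Idx K → Idx K → Vec K → ℝ}
    (hF2 : ∀ s s', ContinuousOn (F2 s s') (cube K)) {y q : Vec K} (hq : q ∈ NI y) {i : Fin n}
    (ℓ : Fin (K i)) (b : Idx K) : |F2 ⟨i, ℓ⟩ b q| ≤ ⨆ ℓ' : Fin (K i), HI F2 ⟨i, ℓ'⟩ b y := by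
  refine le_ciSup_of_le (Set.finite_range _).bddAbove ℓ (le_csSup ?_ ⟨q, hq, rfl⟩)
  exact isCompact_cube.bddAbove_image (hF2 _ _).abs |>.mono (image_mono fun _ h => h.1)

lemma U1_apply_of_ne (y : Vec K) {s₀ r : Idx K} (hr : r.1 ≠ s₀.1) : U1 y s₀ r = y r := by
  simp [U1, hr]

lemma U1_mem_cube {y : Vec K} (hy : y ∈ cube K) (s₀ : Idx K) : U1 y s₀ ∈ cube K := fun r => by
  simp only [U1]
  split_ifs
  exacts [⟨zero_le_one, le_rfl⟩, ⟨le_rfl, zero_le_one⟩, hy r]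

lemma U1_U0_self (y : Vec K) (s₀ : Idx K) : U1 (U0 y s₀.1) s₀ = U1 y s₀ := by
  ext r
  by_cases hr : r.1 = s₀.1 <;> simp [U1, U0, hr]

lemma update_U1_self (y : Vec K) (s₀ : Idx K) : update (U1 y s₀) s₀ 0 = U0 y s₀.1 := by
  ext r
  by_cases hr : r = s₀
  · subst hr; simp [U0]
  · by_cases hr' : r.1 = s₀.1 <;> simp [U1, U0, hr, hr', update_of_ne]

lemma U0_U1_comm (y : Vec K) {s₀ : Idx K} {j : Fin n} (hj : s₀.1 ≠ j) :
    U0 (U1 y s₀) j = U1 (U0 y j) s₀ := by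
  ext r
  by_cases hr : r.1 = j
  · simp [U1, U0, hr, Ne.symm hj]
  · simp [U1, U0, hr]

lemma sub_U1_U0_sub_le {F : Vec K → ℝ} {F1 : Idx K → Vec K → ℝ}
    {F2 : Idx K → Idx K → Vec K → ℝ} (hsm : SmoothData F F1 F2) {y : Vec K} (hy : y ∈ cube K)
    (i j : Fin n) (s t : Fin (K i)) :
    (F (U1 y ⟨i, s⟩) - F (U1 (U0 y j) ⟨i, s⟩)) - (F (U1 y ⟨i, t⟩) - F (U1 (U0 y j) ⟨i, t⟩)) ≤
      2 * ∑ ℓ' : Fin (K j), (⨆ ℓ : Fin (K i), HI F2 ⟨i, ℓ⟩ ⟨j, ℓ'⟩ y) * y ⟨j, ℓ'⟩ := by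
  set S := ∑ ℓ' : Fin (K j), (⨆ ℓ : Fin (K i), HI F2 ⟨i, ℓ⟩ ⟨j, ℓ'⟩ y) * y ⟨j, ℓ'⟩
  rcases eq_or_ne i j with rfl | hij
  · have hS : 0 ≤ S := Finset.sum_nonneg fun ℓ' _ => mul_nonneg ((abs_nonneg _).trans
      (abs_le_iSup_HI hsm.2.2.1 ⟨hy, i, i, fun _ _ _ => rfl⟩ s _)) (hy _).1
    rw [U1_U0_self y ⟨i, s⟩, U1_U0_self y ⟨i, t⟩]
    linarith
  -- zeroing `(i, c)` in `U1 y ⟨i, c⟩` gives `U0 y i` whatever `c` is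
  have hΔ : ∀ c : Fin (K i), |(F (U1 y ⟨i, c⟩) - F (U0 y i)) -
      (F (U1 (U0 y j) ⟨i, c⟩) - F (U0 (U0 y j) i))| ≤ S := by
    intro c
    have h := abs_sub_update_zero_sub_U0_le hsm (U1_mem_cube hy ⟨i, c⟩) (a := ⟨i, c⟩) hij
      (H := fun m => ⨆ ℓ, HI F2 ⟨i, ℓ⟩ ⟨j, m⟩ y) fun m q hq hqx => abs_le_iSup_HI hsm.2.2.1
        ⟨hq, i, j, fun r hri hrj => (hqx r hri hrj).trans (U1_apply_of_ne y hri)⟩ c _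
    have hS : ∑ m, (⨆ ℓ, HI F2 ⟨i, ℓ⟩ ⟨j, m⟩ y) * U1 y ⟨i, c⟩ ⟨j, m⟩ = S :=
      Finset.sum_congr rfl fun m _ => by rw [U1_apply_of_ne y (r := ⟨j, m⟩) hij.symm]
    rwa [U0_U1_comm y (s₀ := ⟨i, c⟩) hij, update_U1_self, update_U1_self, hS] at h
  linarith [(abs_le.1 (hΔ s)).2, (abs_le.1 (hΔ t)).1]

theorem statement14_general (n : ℕ) (K : Fin n → ℕ) (μ : (i : Fin n) → Fin (K i) → ℝ)
    (F : Vec K → ℝ) (F1 : Idx K → Vec K → ℝ) (F2 : Idx K → Idx K → Vec K → ℝ)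
    (hμpos : ∀ i ℓ, 0 < μ i ℓ)
    (hsmooth : SmoothData F F1 F2) :
    ∀ y ∈ cube K, ∀ (i j : Fin n) (ℓ : Fin (K i)),
      |Tmap μ F (U0 y j) ⟨i, ℓ⟩ - Tmap μ F y ⟨i, ℓ⟩| ≤
        Phi F2 i j y * min (Tmap μ F y ⟨i, ℓ⟩) (Tmap μ F (U0 y j) ⟨i, ℓ⟩) := by
  intro y hy i j ℓ
  have hdiff := sub_U1_U0_sub_le hsmooth hy i j
  rw [min_comm]
  exact abs_sub_le_sub_one_mul_min
    (exp_mul_div_sum_le_exp_mul (hμpos i) hdiff ℓ)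
    (exp_mul_div_sum_le_exp_mul (hμpos i) (A := fun t => F (U1 (U0 y j) ⟨i, t⟩))
      (B := fun t => F (U1 y ⟨i, t⟩)) (fun s t => by linarith [hdiff t s]) ℓ)

/-- Lemma 2.4: stability of `T` under zeroing out one row. -/
theorem statement14 (n : ℕ) (K : Fin n → ℕ) (μ : (i : Fin n) → Fin (K i) → ℝ)
    (F : Vec K → ℝ) (F1 : Idx K → Vec K → ℝ) (F2 : Idx K → Idx K → Vec K → ℝ)
    (hn : 1 ≤ n) (hK : ∀ i, 1 ≤ K i)
    (hμpos : ∀ i ℓ, 0 < μ i ℓ) (hμsum : ∀ i, ∑ ℓ, μ i ℓ = 1)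
    (hsmooth : SmoothData F F1 F2) :
    ∀ y ∈ cube K, ∀ (i j : Fin n) (ℓ : Fin (K i)),
      |Tmap μ F (U0 y j) ⟨i, ℓ⟩ - Tmap μ F y ⟨i, ℓ⟩| ≤
        Phi F2 i j y * min (Tmap μ F y ⟨i, ℓ⟩) (Tmap μ F (U0 y j) ⟨i, ℓ⟩) :=
  statement14_general n K μ F F1 F2 hμpos hsmooth

end Meta
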